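/- The quantity D'₁(n,γ) := [15n⁴ − 135n³ + 10n²(43+3γ−4γ²) − 180n(3+γ−γ²) + 8(24+35γ−30γ²−5γ³+6γ⁴)] / [480n(n−1)(n−4)(n−4−2γ)(n−4+2γ)(1−γ²)] is strictly positive for all integers n > 4+2γ and γ ∈ (0,1). -/

import Mathlib

/-!
The denominator is a product of positive factors. For the numerator, the three `γ`-dependent
coefficients are bounded on `[0, 1]` by their values favourable to positivity (`42`, `13/4`, `24`),
which leaves the quartic `15x⁴ - 135x³ + 420x² - 585x + 192`; its Taylor coefficients at `x = 5`
are all positive, and an integer `n > 4 + 2γ` is at least `5`.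
-/

lemma quartic_pos_of_five_le {x : ℝ} (hx : 5 ≤ x) :
    0 < 15*x^4 - 135*x^3 + 420*x^2 - 585*x + 192 := by
  obtain ⟨t, ht, rfl⟩ : ∃ t, 0 ≤ t ∧ x = t + 5 := ⟨x - 5, by linarith, by ring⟩
  have hexpand : 15*(t + 5)^4 - 135*(t + 5)^3 + 420*(t + 5)^2 - 585*(t + 5) + 192
      = 15*t^4 + 165*t^3 + 645*t^2 + 990*t + 267 := by ring
  rw [hexpand]
  positivity

lemma numerator_pos {x γ : ℝ} (hx : 5 ≤ x) (hγ : γ ∈ Set.Icc (0:ℝ) 1) :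
    0 < 15*x^4 - 135*x^3 + 10*x^2*(43 + 3*γ - 4*γ^2) - 180*x*(3 + γ - γ^2)
      + 8*(24 + 35*γ - 30*γ^2 - 5*γ^3 + 6*γ^4) := by
  obtain ⟨hγ0, hγ1⟩ := hγ
  have hA : 42 ≤ 43 + 3*γ - 4*γ^2 := by nlinarith
  have hB : 3 + γ - γ^2 ≤ 13/4 := by nlinarith [sq_nonneg (γ - 1/2)]
  have hC : 24 ≤ 24 + 35*γ - 30*γ^2 - 5*γ^3 + 6*γ^4 := by nlinarith [pow_le_one₀ hγ0 hγ1 (n := 2)]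
  calc 0 < 15*x^4 - 135*x^3 + 420*x^2 - 585*x + 192 := quartic_pos_of_five_le hx
    _ = 15*x^4 - 135*x^3 + 10*x^2*42 - 180*x*(13/4) + 8*24 := by ring
    _ ≤ _ := by gcongr

lemma denominator_pos {x γ : ℝ} (hγ : γ ∈ Set.Ioo (0:ℝ) 1) (hx : 4 + 2*γ < x) :
    0 < 480*x*(x - 1)*(x - 4)*(x - 4 - 2*γ)*(x - 4 + 2*γ)*(1 - γ^2) := by
  obtain ⟨hγ0, hγ1⟩ := hγ
  have h1 : 0 < x := by linarith
  have h2 : 0 < x - 1 := by linarith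
  have h3 : 0 < x - 4 := by linarith
  have h4 : 0 < x - 4 - 2*γ := by linarith
  have h5 : 0 < x - 4 + 2*γ := by linarith
  have h6 : 0 < 1 - γ^2 := by nlinarith
  positivity

theorem stmt_10 (n : ℕ) (γ : ℝ) (hγ : γ ∈ Set.Ioo (0:ℝ) 1) (hn : 4 + 2*γ < (n:ℝ)) :
    0 < (15*(n:ℝ)^4 - 135*(n:ℝ)^3 + 10*(n:ℝ)^2*(43 + 3*γ - 4*γ^2)
          - 180*(n:ℝ)*(3 + γ - γ^2) + 8*(24 + 35*γ - 30*γ^2 - 5*γ^3 + 6*γ^4)) /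
        (480*(n:ℝ)*((n:ℝ) - 1)*((n:ℝ) - 4)*((n:ℝ) - 4 - 2*γ)*((n:ℝ) - 4 + 2*γ)*(1 - γ^2)) := by
  have hn5 : (5:ℝ) ≤ n := by
    have : 4 < n := by exact_mod_cast (show (4:ℝ) < n by linarith [hγ.1])
    exact_mod_cast this
  exact div_pos (numerator_pos hn5 (Set.Ioo_subset_Icc_self hγ)) (denominator_pos hγ hn)
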